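/- Let u : ℝ² → ℂ be radial with u ∈ H¹(ℝ²). Then for every x with |x| > 0, the Strauss-type bound |x|^{1/2}·|u(x)| ≤ C·‖u‖_{L²}^{1/2}·‖∇u‖_{L²}^{1/2} holds for some universal constant C (for a.e. x, for the continuous representative away from the origin). -/

import Mathlib

open MeasureTheory Set Metric Module
open scoped ENNReal

/-!
Write a radial `u` as `u x = g ‖x‖`. Polar coordinates turn the `L²` norms of `u` and of `∇u`
(whose norm is radial as well, by reflection invariance) into `L²(s^(n-1) ds)` norms of `g` and
`g'`, up to the factor `n |B₁|`. For `0 < r < R`,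
`‖g r‖² ≤ ‖g R‖² + 2 ∫_r^R ‖g‖ ‖g'‖ ≤ ‖g R‖² + 2 r^(1-n) ∫_0^∞ ‖g‖ ‖g'‖ s^(n-1) ds`,
the last integral is bounded by Cauchy–Schwarz, and `‖g R‖` is arbitrarily small for suitable
`R > r` because `g ∈ L²(s^(n-1) ds)` while `(r, ∞)` has infinite measure.
-/

noncomputable def radialMeasure (n : ℕ) : Measure ℝ :=
  (volume.restrict (Ioi 0)).withDensity fun s => ENNReal.ofReal (s ^ (n - 1))

section Polar

variable {E : Type*} [NormedAddCommGroup E] [InnerProductSpace ℝ E] [FiniteDimensional ℝ E]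
  [MeasurableSpace E] (μ : Measure E) [μ.IsAddHaarMeasure]

theorem finrank_mul_addHaar_ball_ne_top : (finrank ℝ E : ℝ≥0∞) * μ (ball 0 1) ≠ ∞ :=
  ENNReal.mul_ne_top (ENNReal.natCast_ne_top _) measure_ball_lt_top.ne

variable [Nontrivial E]

theorem finrank_mul_addHaar_ball_ne_zero : (finrank ℝ E : ℝ≥0∞) * μ (ball 0 1) ≠ 0 :=
  mul_ne_zero (by simp [finrank_pos.ne']) (measure_ball_pos μ 0 one_pos).ne'

variable [BorelSpace E]

theorem lintegral_fun_norm_addHaar (f : ℝ → ℝ≥0∞) (hf : Measurable f) :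
    ∫⁻ x, f ‖x‖ ∂μ = finrank ℝ E * μ (ball 0 1) * ∫⁻ s, f s ∂radialMeasure (finrank ℝ E) := by
  have hf' : Measurable fun p : sphere (0 : E) 1 × Ioi (0 : ℝ) => f p.2 := by fun_prop
  calc ∫⁻ x, f ‖x‖ ∂μ = ∫⁻ x : ({0}ᶜ : Set E), f ‖(x : E)‖ ∂μ.comap Subtype.val := by
        rw [lintegral_subtype_comap (measurableSet_singleton 0).compl (fun x => f ‖x‖),
          restrict_compl_singleton]
    _ = ∫⁻ p, f p.2 ∂μ.toSphere.prod (Measure.volumeIoiPow (finrank ℝ E - 1)) := by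
        rw [← (μ.measurePreserving_homeomorphUnitSphereProd).lintegral_comp hf']
        simp
    _ = _ := by
        rw [lintegral_prod _ hf'.aemeasurable]
        dsimp only
        rw [lintegral_const, Measure.toSphere_apply_univ, mul_comm]
        congr 1
        rw [Measure.volumeIoiPow, lintegral_withDensity_eq_lintegral_mul _ (by fun_prop)
            (show Measurable fun s : Ioi (0 : ℝ) => f s from hf.comp measurable_subtype_coe),
          radialMeasure, lintegral_withDensity_eq_lintegral_mul _ (by fun_prop) hf,
          ← lintegral_subtype_comap measurableSet_Ioi]
        rfl

theorem map_norm_addHaar :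
    μ.map (‖·‖) = (finrank ℝ E * μ (ball 0 1)) • radialMeasure (finrank ℝ E) :=
  Measure.ext_of_lintegral _ fun f hf => by
    rw [lintegral_map hf measurable_norm, lintegral_fun_norm_addHaar μ f hf, lintegral_smul_measure,
      smul_eq_mul]

variable {G G' : Type*} [NormedAddCommGroup G] [NormedAddCommGroup G'] {v : E → G} {f : ℝ → G'}
  {p : ℝ≥0∞}

theorem eLpNorm_eq_of_norm_eq_fun_norm (hp : p ≠ ∞)
    (hf : AEStronglyMeasurable f (radialMeasure (finrank ℝ E))) (hv : ∀ x, ‖v x‖ = ‖f ‖x‖‖) :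
    eLpNorm v p μ = (finrank ℝ E * μ (ball 0 1)) ^ (1 / p.toReal) *
      eLpNorm f p (radialMeasure (finrank ℝ E)) := by
  have hf' : AEStronglyMeasurable f (μ.map (‖·‖)) := by
    rw [map_norm_addHaar]
    exact hf.smul_measure _
  rw [eLpNorm_congr_norm_ae (ae_of_all _ hv), ← Function.comp_def,
    ← eLpNorm_map_measure hf' measurable_norm.aemeasurable, map_norm_addHaar,
    eLpNorm_smul_measure_of_ne_top hp, smul_eq_mul, one_div, ENNReal.toReal_inv, one_div]

theorem toReal_eLpNorm_two_eq_of_norm_eq_fun_norm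
    (hf : AEStronglyMeasurable f (radialMeasure (finrank ℝ E))) (hv : ∀ x, ‖v x‖ = ‖f ‖x‖‖) :
    (eLpNorm v 2 μ).toReal = √((finrank ℝ E : ℝ≥0∞) * μ (ball 0 1)).toReal *
      (eLpNorm f 2 (radialMeasure (finrank ℝ E))).toReal := by
  rw [eLpNorm_eq_of_norm_eq_fun_norm μ ENNReal.ofNat_ne_top hf hv, ENNReal.toReal_mul,
    ← ENNReal.toReal_rpow, ENNReal.toReal_ofNat, Real.sqrt_eq_rpow]

theorem MeasureTheory.MemLp.of_norm_eq_fun_norm (h : MemLp v p μ) (hp : p ≠ ∞)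
    (hf : AEStronglyMeasurable f (radialMeasure (finrank ℝ E))) (hv : ∀ x, ‖v x‖ = ‖f ‖x‖‖) :
    MemLp f p (radialMeasure (finrank ℝ E)) := by
  refine ⟨hf, ENNReal.lt_top_of_mul_ne_top_right
    (a := ((finrank ℝ E : ℝ≥0∞) * μ (ball 0 1)) ^ (1 / p.toReal)) ?_ ?_⟩
  · exact eLpNorm_eq_of_norm_eq_fun_norm μ hp hf hv ▸ h.2.ne
  · exact (ENNReal.rpow_pos (pos_iff_ne_zero.2 (finrank_mul_addHaar_ball_ne_zero μ))
      (finrank_mul_addHaar_ball_ne_top μ)).ne'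

end Polar

namespace radialMeasure

variable (n : ℕ)

theorem restrict_Ioi_absolutelyContinuous : volume.restrict (Ioi 0) ≪ radialMeasure n := by
  refine withDensity_absolutelyContinuous' (by fun_prop) ?_
  filter_upwards [ae_restrict_mem measurableSet_Ioi] with s (hs : 0 < s)
  positivity

theorem ofReal_pow_mul_setLIntegral_Ioi_le {a : ℝ} (ha : 0 < a) (f : ℝ → ℝ≥0∞) :
    ENNReal.ofReal (a ^ (n - 1)) * ∫⁻ s in Ioi a, f s ≤ ∫⁻ s, f s ∂radialMeasure n := by
  rw [radialMeasure, lintegral_withDensity_eq_lintegral_mul_non_measurable _ (by fun_prop)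
    (ae_of_all _ fun _ => ENNReal.ofReal_lt_top), ← lintegral_const_mul' _ _ ENNReal.ofReal_ne_top]
  calc ∫⁻ s in Ioi a, ENNReal.ofReal (a ^ (n - 1)) * f s
      ≤ ∫⁻ s in Ioi a, ENNReal.ofReal (s ^ (n - 1)) * f s :=
        setLIntegral_mono' measurableSet_Ioi fun s (hs : a < s) => by gcongr
    _ ≤ ∫⁻ s in Ioi 0, ENNReal.ofReal (s ^ (n - 1)) * f s :=
        lintegral_mono_set (Ioi_subset_Ioi ha.le)

theorem measure_Ioi (a : ℝ) : radialMeasure n (Ioi a) = ∞ := by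
  set b := max a 1
  have hb : 0 < b := zero_lt_one.trans_le (le_max_right a 1)
  refine top_unique ?_
  calc ∞ = ENNReal.ofReal (b ^ (n - 1)) * ∫⁻ s in Ioi b, (Ioi a).indicator 1 s := by
        rw [setLIntegral_congr_fun measurableSet_Ioi fun s (hs : b < s) =>
            indicator_of_mem (mem_Ioi.2 ((le_max_left a 1).trans_lt hs)) (1 : ℝ → ℝ≥0∞)]
        simp [ENNReal.mul_top, hb]
    _ ≤ ∫⁻ s, (Ioi a).indicator 1 s ∂radialMeasure n := ofReal_pow_mul_setLIntegral_Ioi_le n hb _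
    _ = radialMeasure n (Ioi a) := lintegral_indicator_one measurableSet_Ioi

variable {n}

theorem integrableOn_Ioi {G : Type*} [NormedAddCommGroup G] {f : ℝ → G}
    (hf : Integrable f (radialMeasure n)) {a : ℝ} (ha : 0 < a) : IntegrableOn f (Ioi a) := by
  have hac : volume.restrict (Ioi a) ≪ radialMeasure n :=
    (Measure.restrict_mono (Ioi_subset_Ioi ha.le) le_rfl).absolutelyContinuous.trans
      (restrict_Ioi_absolutelyContinuous n)
  refine ⟨hf.1.mono_ac hac, ?_⟩
  have h := (ofReal_pow_mul_setLIntegral_Ioi_le n ha fun s => ‖f s‖ₑ).trans_lt hf.2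
  exact ENNReal.lt_top_of_mul_ne_top_right h.ne (by positivity)

theorem pow_mul_setIntegral_Ioi_le {f : ℝ → ℝ} (hf : Integrable f (radialMeasure n)) (hf0 : 0 ≤ f)
    {a : ℝ} (ha : 0 < a) : a ^ (n - 1) * ∫ s in Ioi a, f s ≤ ∫ s, f s ∂radialMeasure n := by
  rw [integral_eq_lintegral_of_nonneg_ae (ae_of_all _ hf0) (integrableOn_Ioi hf ha).1,
    integral_eq_lintegral_of_nonneg_ae (ae_of_all _ hf0) hf.1,
    ← ENNReal.toReal_ofReal (pow_nonneg ha.le (n - 1)), ← ENNReal.toReal_mul]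
  exact ENNReal.toReal_mono hf.lintegral_lt_top.ne (ofReal_pow_mul_setLIntegral_Ioi_le n ha _)

theorem _root_.MeasureTheory.MemLp.exists_gt_norm_lt_of_radialMeasure {G : Type*}
    [NormedAddCommGroup G] {f : ℝ → G} {p : ℝ≥0∞} (hf : MemLp f p (radialMeasure n)) (hp0 : p ≠ 0)
    (hp : p ≠ ∞) (a : ℝ) {ε : ℝ} (hε : 0 < ε) : ∃ R > a, ‖f R‖ < ε := by
  by_contra! h
  have hlarge : Ioi a ⊆ {s | ⟨ε, hε.le⟩ ≤ ‖f s‖₊} := fun s hs => h s hs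
  have := (measure_mono (μ := radialMeasure n) hlarge).trans_lt
    (hf.meas_ge_lt_top hp0 hp (ε := ⟨ε, hε.le⟩) fun h0 => hε.ne' (congrArg Subtype.val h0))
  simp [measure_Ioi] at this

end radialMeasure

theorem integral_norm_mul_norm_le_toReal_eLpNorm_two_mul {α G H : Type*} [MeasurableSpace α]
    {μ : Measure α} [NormedAddCommGroup G] [NormedAddCommGroup H] {f : α → G} {g : α → H}
    (hf : MemLp f 2 μ) (hg : MemLp g 2 μ) :
    ∫ a, ‖f a‖ * ‖g a‖ ∂μ ≤ (eLpNorm f 2 μ).toReal * (eLpNorm g 2 μ).toReal := by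
  have h := integral_mul_norm_le_Lp_mul_Lq (f := fun a => ‖f a‖) (g := fun a => ‖g a‖)
    Real.HolderConjugate.two_two (by rw [ENNReal.ofReal_ofNat]; exact hf.norm)
    (by rw [ENNReal.ofReal_ofNat]; exact hg.norm)
  rw [← eLpNorm_norm f, ← eLpNorm_norm g,
    hf.norm.eLpNorm_eq_integral_rpow_norm two_ne_zero ENNReal.ofNat_ne_top,
    hg.norm.eLpNorm_eq_integral_rpow_norm two_ne_zero ENNReal.ofNat_ne_top,
    ENNReal.toReal_ofReal (by positivity), ENNReal.toReal_ofReal (by positivity)]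
  simpa using h

section OneDimensional

variable {F : Type*} [NormedAddCommGroup F] [InnerProductSpace ℝ F]

theorem norm_sq_le_norm_sq_add_integral {g : ℝ → F} {r R : ℝ} (hrR : r ≤ R)
    (hg : ∀ s ∈ Icc r R, DifferentiableAt ℝ g s)
    (hint : IntegrableOn (fun s => ‖g s‖ * ‖deriv g s‖) (Icc r R)) :
    ‖g r‖ ^ 2 ≤ ‖g R‖ ^ 2 + 2 * ∫ s in r..R, ‖g s‖ * ‖deriv g s‖ := by
  have h := intervalIntegral.integral_le_sub_of_hasDeriv_right_of_le hrR
    (fun s hs => (hg s hs).continuousAt.continuousWithinAt.norm.pow 2)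
    (fun s hs => ((hg s (Ioo_subset_Icc_self hs)).hasDerivAt.norm_sq).hasDerivWithinAt)
    (hint.const_mul (-2)) fun s _ => by
      nlinarith [abs_le.1 (abs_real_inner_le_norm (g s) (deriv g s))]
  rw [intervalIntegral.integral_const_mul] at h
  simp only [Pi.pow_apply] at h
  linarith

theorem pow_mul_norm_sq_le_of_memLp_radialMeasure (n : ℕ) {g : ℝ → F}
    (hg : ∀ s > 0, DifferentiableAt ℝ g s) (hg₂ : MemLp g 2 (radialMeasure n))
    (hg'₂ : MemLp (deriv g) 2 (radialMeasure n)) {r : ℝ} (hr : 0 < r) :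
    r ^ (n - 1) * ‖g r‖ ^ 2 ≤ 2 * (eLpNorm g 2 (radialMeasure n)).toReal *
      (eLpNorm (deriv g) 2 (radialMeasure n)).toReal := by
  set ψ := fun s => ‖g s‖ * ‖deriv g s‖
  have hψ : Integrable ψ (radialMeasure n) := hg₂.norm.integrable_mul hg'₂.norm
  have hψ0 : 0 ≤ ψ := fun s => by positivity
  have hψr : IntegrableOn ψ (Ioi r) := radialMeasure.integrableOn_Ioi hψ hr
  have hstep : ∀ R > r, r ^ (n - 1) * ‖g r‖ ^ 2 ≤
      r ^ (n - 1) * ‖g R‖ ^ 2 + 2 * ∫ s, ψ s ∂radialMeasure n := by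
    intro R hR
    have hFTC := norm_sq_le_norm_sq_add_integral hR.le (fun s hs => hg s (hr.trans_le hs.1))
      ((hψr.mono_set Ioc_subset_Ioi_self).congr_set_ae Ioc_ae_eq_Icc.symm)
    have htail : ∫ s in r..R, ψ s ≤ ∫ s in Ioi r, ψ s := by
      rw [intervalIntegral.integral_of_le hR.le]
      exact setIntegral_mono_set hψr (ae_of_all _ hψ0) Ioc_subset_Ioi_self.eventuallyLE
    have hweight := radialMeasure.pow_mul_setIntegral_Ioi_le hψ hψ0 hr
    have hr' : 0 ≤ r ^ (n - 1) := by positivity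
    nlinarith
  have hCS := integral_norm_mul_norm_le_toReal_eLpNorm_two_mul hg₂ hg'₂
  by_contra! hlt
  set δ := r ^ (n - 1) * ‖g r‖ ^ 2 - 2 * ∫ s, ψ s ∂radialMeasure n
  have hrpos : 0 < r ^ (n - 1) := by positivity
  have hδ : 0 < δ := by simp only [δ, ψ]; linarith
  obtain ⟨R, hR, hgR⟩ := hg₂.exists_gt_norm_lt_of_radialMeasure two_ne_zero ENNReal.ofNat_ne_top r
    (Real.sqrt_pos.2 (div_pos hδ hrpos))
  have hsmall : r ^ (n - 1) * ‖g R‖ ^ 2 < δ :=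
    (lt_div_iff₀' hrpos).1 ((Real.lt_sqrt (norm_nonneg _)).1 hgR)
  linarith [hstep R hR]

end OneDimensional

section Radial

variable {E : Type*} [NormedAddCommGroup E] [InnerProductSpace ℝ E]
  {F : Type*} [NormedAddCommGroup F] [NormedSpace ℝ F]

theorem norm_fderiv_eq_of_radial {u : E → F} (hrad : ∀ x y : E, ‖x‖ = ‖y‖ → u x = u y) {y z : E}
    (h : ‖y‖ = ‖z‖) : ‖fderiv ℝ u y‖ = ‖fderiv ℝ u z‖ := by
  set T : E ≃ₗᵢ[ℝ] E := Submodule.reflection (ℝ ∙ (y - z))ᗮ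
  have hT : u ∘ T.toContinuousLinearEquiv = u := funext fun w => hrad _ _ (T.norm_map w)
  conv_lhs => rw [← hT, ContinuousLinearEquiv.comp_right_fderiv]
  rw [ContinuousLinearMap.opNorm_comp_linearIsometryEquiv]
  exact congrArg (‖fderiv ℝ u ·‖) (Submodule.reflection_sub h)

end Radial

section Strauss

variable {E : Type*} [NormedAddCommGroup E] [InnerProductSpace ℝ E] [FiniteDimensional ℝ E]
  [MeasurableSpace E] [BorelSpace E] [Nontrivial E] (μ : Measure E) [μ.IsAddHaarMeasure]
  {F : Type*} [NormedAddCommGroup F] [InnerProductSpace ℝ F] [CompleteSpace F]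

theorem pow_mul_norm_sq_le_of_radial {u : E → F} (hu : Differentiable ℝ u)
    (hrad : ∀ x y : E, ‖x‖ = ‖y‖ → u x = u y) (hu₂ : MemLp u 2 μ)
    (hu'₂ : MemLp (fderiv ℝ u) 2 μ) {x : E} (hx : x ≠ 0) :
    ‖x‖ ^ (finrank ℝ E - 1) * ‖u x‖ ^ 2 ≤
      2 / ((finrank ℝ E : ℝ≥0∞) * μ (ball 0 1)).toReal * (eLpNorm u 2 μ).toReal *
        (eLpNorm (fderiv ℝ u) 2 μ).toReal := by
  obtain ⟨e, he⟩ := exists_norm_eq E zero_le_one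
  set ν := radialMeasure (finrank ℝ E)
  set c := ((finrank ℝ E : ℝ≥0∞) * μ (ball 0 1)).toReal
  set g : ℝ → F := fun s => u (s • e)
  set d : ℝ → ℝ := fun s => ‖fderiv ℝ u (s • e)‖
  have hnorm (y : E) : ‖y‖ = ‖‖y‖ • e‖ := by simp [norm_smul, he]
  have hug (y : E) : ‖u y‖ = ‖g ‖y‖‖ := by rw [hrad _ _ (hnorm y)]
  have hud (y : E) : ‖fderiv ℝ u y‖ = ‖d ‖y‖‖ := by
    simp [d, norm_fderiv_eq_of_radial hrad (hnorm y)]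
  have hg_deriv (s : ℝ) : HasDerivAt g (fderiv ℝ u (s • e) e) s :=
    (hu _).hasFDerivAt.comp_hasDerivAt s
      ((hasDerivAt_id s).smul_const e |>.congr_deriv (one_smul ℝ e))
  have hg'_le (s : ℝ) : ‖deriv g s‖ ≤ d s := by
    simpa [(hg_deriv s).deriv, he] using (fderiv ℝ u (s • e)).le_opNorm e
  have hg_meas : AEStronglyMeasurable g ν := (hu.continuous.comp (by fun_prop)).aestronglyMeasurable
  have hd_meas : AEStronglyMeasurable d ν :=
    ((measurable_fderiv ℝ u).comp (by fun_prop)).norm.aestronglyMeasurable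
  have hgν : MemLp g 2 ν := hu₂.of_norm_eq_fun_norm μ ENNReal.ofNat_ne_top hg_meas hug
  have hdν : MemLp d 2 ν := hu'₂.of_norm_eq_fun_norm μ ENNReal.ofNat_ne_top hd_meas hud
  have hg'ν : MemLp (deriv g) 2 ν := hdν.of_le (aestronglyMeasurable_deriv g ν)
    (ae_of_all _ fun s => (hg'_le s).trans (le_abs_self _))
  have hc : 0 < c := ENNReal.toReal_pos (finrank_mul_addHaar_ball_ne_zero μ)
    (finrank_mul_addHaar_ball_ne_top μ)
  rw [toReal_eLpNorm_two_eq_of_norm_eq_fun_norm μ hg_meas hug,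
    toReal_eLpNorm_two_eq_of_norm_eq_fun_norm μ hd_meas hud, hrad _ _ (hnorm x)]
  calc ‖x‖ ^ (finrank ℝ E - 1) * ‖g ‖x‖‖ ^ 2
      ≤ 2 * (eLpNorm g 2 ν).toReal * (eLpNorm (deriv g) 2 ν).toReal :=
        pow_mul_norm_sq_le_of_memLp_radialMeasure _ (fun s _ => (hg_deriv s).differentiableAt)
          hgν hg'ν (norm_pos_iff.2 hx)
    _ ≤ 2 * (eLpNorm g 2 ν).toReal * (eLpNorm d 2 ν).toReal := by
        gcongr
        exacts [hdν.2.ne, eLpNorm_mono_real hg'_le]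
    _ = 2 / c * (√c * (eLpNorm g 2 ν).toReal) * (√c * (eLpNorm d 2 ν).toReal) := by
        field_simp
        rw [Real.sq_sqrt hc.le]

end Strauss

/-- Two-dimensional radial Strauss estimate: for radial `u ∈ H¹(ℝ²)` (continuous
representative), `|x|^{1/2} |u(x)| ≤ C ‖u‖_{L²}^{1/2} ‖∇u‖_{L²}^{1/2}` for `|x| > 0`,
with a universal constant `C`. -/
theorem stmt_12 :
    ∃ C > 0, ∀ u : EuclideanSpace ℝ (Fin 2) → ℂ,
      Continuous u → Differentiable ℝ u →
      (∀ x y : EuclideanSpace ℝ (Fin 2), ‖x‖ = ‖y‖ → u x = u y) →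
      MemLp u 2 volume → MemLp (fun x => fderiv ℝ u x) 2 volume →
      ∀ x : EuclideanSpace ℝ (Fin 2), 0 < ‖x‖ →
        ‖x‖ ^ ((1 : ℝ) / 2) * ‖u x‖
          ≤ C * (eLpNorm u 2 volume).toReal ^ ((1 : ℝ) / 2)
              * (eLpNorm (fun x => fderiv ℝ u x) 2 volume).toReal ^ ((1 : ℝ) / 2) := by
  set c := ((finrank ℝ (EuclideanSpace ℝ (Fin 2)) : ℝ≥0∞) *
    volume (ball (0 : EuclideanSpace ℝ (Fin 2)) 1)).toReal
  have hc : 0 < c := ENNReal.toReal_pos (finrank_mul_addHaar_ball_ne_zero volume)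
    (finrank_mul_addHaar_ball_ne_top volume)
  refine ⟨√(2 / c), by positivity, fun u _ hu hrad hu₂ hu'₂ x hx => ?_⟩
  have h := pow_mul_norm_sq_le_of_radial volume hu hrad hu₂ hu'₂ (norm_pos_iff.1 hx)
  simp only [← Real.sqrt_eq_rpow]
  calc √‖x‖ * ‖u x‖ = √(‖x‖ * ‖u x‖ ^ 2) := by
        rw [Real.sqrt_mul hx.le, Real.sqrt_sq (norm_nonneg _)]
    _ ≤ √(2 / c * (eLpNorm u 2 volume).toReal * (eLpNorm (fderiv ℝ u) 2 volume).toReal) :=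
        Real.sqrt_le_sqrt (by simpa [c] using h)
    _ = _ := by rw [Real.sqrt_mul (by positivity), Real.sqrt_mul (by positivity)]
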